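/- Let θ : A → A^λ be a primitive substitution of constant length λ ≥ 2 and let ~θ : 𝒳(θ) → 𝒳(θ)^λ be its synchronizing part. Then: (i) the column number c(~θ) = 1; (ii) ~θ is primitive; (iii) if moreover M₀ ∈ 𝒳(θ) satisfies ~θ(M₀)_0 = M₀, then the height h(~θ) = 1. -/

import Mathlib

open Filter Topology

/-- `substIter θ l k a j` is the `j`-th letter of `θ^k(a)`, where `θ : A → A^l` is a
substitution of constant length `l` (the letters of `θ(a)` being `θ a 0, …, θ a (l-1)`).
It is meaningful for `j < l ^ k` and satisfies
`θ^{k+1}(a)_{j'·l + r} = θ(θ^k(a)_{j'})_r`. -/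
def substIter {A : Type*} (θ : A → ℕ → A) (l : ℕ) : ℕ → A → ℕ → A
  | 0, a, _ => a
  | k + 1, a, j => θ (substIter θ l k a (j / l)) (j % l)

/-- A substitution of constant length `l` is primitive if some iterate of every letter
contains every letter. -/
def SubstPrimitive {A : Type*} (θ : A → ℕ → A) (l : ℕ) : Prop :=
  ∃ k, 1 ≤ k ∧ ∀ a b : A, ∃ j, j < l ^ k ∧ substIter θ l k a j = b

/-- Primitivity of a substitution restricted to a sub-alphabet `S`. -/
def SubstPrimitiveOn {A : Type*} (θ : A → ℕ → A) (l : ℕ) (S : Set A) : Prop :=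
  ∃ k, 1 ≤ k ∧ ∀ a ∈ S, ∀ b ∈ S, ∃ j, j < l ^ k ∧ substIter θ l k a j = b

/-- The column number of a substitution of constant length `l`, restricted to the
sub-alphabet `S`: the minimal cardinality of a column set `{θ^k(a)_j : a ∈ S}`. -/
noncomputable def columnNumberOn {A : Type*} (θ : A → ℕ → A) (l : ℕ) (S : Set A) : ℕ :=
  sInf { n : ℕ | ∃ k, 1 ≤ k ∧ ∃ j, j < l ^ k ∧
    ((fun a => substIter θ l k a j) '' S).ncard = n }

/-- The column number `c(θ)` of a substitution of constant length `l`. -/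
noncomputable def columnNumber {A : Type*} (θ : A → ℕ → A) (l : ℕ) : ℕ :=
  columnNumberOn θ l Set.univ

/-- The one-sided fixed point `u` of `θ` obtained by iterating `θ` at a letter `a₀`
with `θ(a₀)_0 = a₀`: `u n = θ^k(a₀)_n` for any `k` with `n < l^k`. -/
def substFixedPoint {A : Type*} (θ : A → ℕ → A) (l : ℕ) (a₀ : A) : ℕ → A :=
  fun n => substIter θ l (n + 1) a₀ n

/-- The height `h(θ)`: the largest `m ≥ 1` coprime to `l` dividing
`gcd {r ≥ 1 : u[r] = u[0]}`, i.e. dividing every return time of `u[0]`. -/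
noncomputable def substHeight {A : Type*} (θ : A → ℕ → A) (l : ℕ) (a₀ : A) : ℕ :=
  sSup { m : ℕ | 1 ≤ m ∧ Nat.Coprime m l ∧
    ∀ r : ℕ, 1 ≤ r → substFixedPoint θ l a₀ r = substFixedPoint θ l a₀ 0 → m ∣ r }

/-- The subshift `X_θ ⊆ A^ℤ`: all `x` each of whose finite blocks occurs in some
`θ^k(a)`. -/
def subshift {A : Type*} (θ : A → ℕ → A) (l : ℕ) : Set (ℤ → A) :=
  { x | ∀ (i : ℤ) (n : ℕ), ∃ k, 1 ≤ k ∧ ∃ a : A, ∃ j : ℕ, j + n ≤ l ^ k ∧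
      ∀ m : ℕ, m < n → x (i + (m : ℤ)) = substIter θ l k a (j + m) }

/-- The subshift `X_x ⊆ A^ℤ` generated by a one-sided sequence `x ∈ A^ℕ`: all `z`
each of whose finite blocks occurs in `x`. -/
def subshiftOf {A : Type*} (x : ℕ → A) : Set (ℤ → A) :=
  { z | ∀ (i : ℤ) (n : ℕ), ∃ j : ℕ, ∀ m : ℕ, m < n → z (i + (m : ℤ)) = x (j + m) }

/-- The left shift on `A^ℤ`. -/
def shift {A : Type*} (x : ℤ → A) : ℤ → A := fun n => x (n + 1)

/-- A bounded arithmetic function. -/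
def BoundedSeq (u : ℕ → ℂ) : Prop := ∃ C : ℝ, ∀ n, ‖u n‖ ≤ C

/-- A multiplicative arithmetic function: `u(mn) = u(m)u(n)` for coprime `m, n`. -/
def MultiplicativeSeq (u : ℕ → ℂ) : Prop :=
  ∀ m n : ℕ, Nat.Coprime m n → u (m * n) = u m * u n

/-- An aperiodic arithmetic function: zero mean along every arithmetic progression. -/
def AperiodicSeq (u : ℕ → ℂ) : Prop :=
  ∀ a b : ℕ, 1 ≤ a →
    Tendsto (fun N : ℕ => (N : ℂ)⁻¹ * ∑ n ∈ Finset.Icc 1 N, u (a * n + b)) atTop (nhds 0)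

/-- The Weyl pseudo-metric
`d_W(x,y) = limsup_N sup_{ℓ ≥ 1} (1/N)·#{ℓ ≤ n < ℓ+N : x n ≠ y n}`. -/
noncomputable def weylDist {B : Type*} (x y : ℕ → B) : ℝ :=
  limsup (fun N : ℕ =>
    ⨆ ℓ : ℕ, ⨆ _ : 1 ≤ ℓ,
      (({ n : ℕ | ℓ ≤ n ∧ n < ℓ + N ∧ x n ≠ y n }.ncard : ℝ) / N)) atTop

/-- A periodic sequence. -/
def IsPeriodicSeq {B : Type*} (v : ℕ → B) : Prop :=
  ∃ p, 1 ≤ p ∧ ∀ n, v (n + p) = v n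

/-- Weyl rational almost periodicity: a `d_W`-limit of periodic sequences. -/
def WRAPSeq {B : Type*} (x : ℕ → B) : Prop :=
  ∀ ε : ℝ, 0 < ε → ∃ v : ℕ → B, IsPeriodicSeq v ∧ weylDist x v < ε

/-- The family `𝒳(θ)` of column sets realizing the column number of `θ`. -/
noncomputable def columnSets {A : Type*} (θ : A → ℕ → A) (l : ℕ) : Set (Set A) :=
  { M | (∃ k, 1 ≤ k ∧ ∃ j, j < l ^ k ∧ M = (fun a => substIter θ l k a j) '' Set.univ) ∧
        M.ncard = columnNumber θ l }

/-- The synchronizing part `~θ` of `θ`, as a substitution on subsets of the alphabet: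
`~θ(M)_j = {θ(a)_j : a ∈ M}`. -/
def synchPart {A : Type*} (θ : A → ℕ → A) : Set A → ℕ → Set A :=
  fun M j => (fun a => θ a j) '' M

/-- The joining `θ ∨ ζ` of two substitutions of the same constant length. -/
def joinSub {A B : Type*} (θ : A → ℕ → A) (ζ : B → ℕ → B) : A × B → ℕ → A × B :=
  fun p j => (θ p.1 j, ζ p.2 j)

/-- The pure base `θ^{(h)}` of `θ`: a substitution of length `l` on blocks of length `h`,
`θ^{(h)}(w)_j = θ(w)[jh, (j+1)h−1]`, where `θ(w)` is the concatenation
`θ(w_0)…θ(w_{h-1})`. -/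
def pureBase {A : Type*} (θ : A → ℕ → A) (l h : ℕ) : (Fin h → A) → ℕ → (Fin h → A) :=
  fun w j i => θ (w ⟨(j * h + i.val) / l % h, Nat.mod_lt _ i.pos⟩) ((j * h + i.val) % l)

/-- Iterated cocycle `σ^{(k)}`, with `σ^{(1)} = σ` and
`σ^{(k+1)}(M, j₁·l + j₂) = σ^{(k)}(M, j₁) ∘ σ(~θ^k(M)_{j₁}, j₂)`. -/
def sigmaIter {X : Type*} {c : ℕ} (tilde : X → ℕ → X)
    (σ : X → ℕ → Equiv.Perm (Fin c)) (l : ℕ) : ℕ → X → ℕ → Equiv.Perm (Fin c)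
  | 0, _, _ => 1
  | k + 1, M, j =>
      sigmaIter tilde σ l k M (j / l) * σ (substIter tilde l k M (j / l)) (j % l)

/-- The group extension substitution `Θ̂(g, M)_j = (g ∘ σ(M,j), ~θ(M)_j)`. -/
def hatTheta {X : Type*} {c : ℕ} (tilde : X → ℕ → X)
    (σ : X → ℕ → Equiv.Perm (Fin c)) : Equiv.Perm (Fin c) × X → ℕ → Equiv.Perm (Fin c) × X :=
  fun p j => (p.1 * σ p.2 j, tilde p.2 j)

/-- The group `G` generated by the cocycle values `σ(M, j)`, `M ∈ 𝒳`, `j < l`. -/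
def cocycleGroup {X : Type*} {c : ℕ} (σ : X → ℕ → Equiv.Perm (Fin c)) (l : ℕ) :
    Subgroup (Equiv.Perm (Fin c)) :=
  Subgroup.closure { g | ∃ M : X, ∃ j, j < l ∧ g = σ M j }

/-!
Every minimal column set `M ∈ 𝒳(θ)` is itself a column `{θ^k(a)_j : a ∈ A}`, so its image under
any column `a ↦ θ^{k'}(a)_{j'}` is again a column of `θ`; that image has at least `c(θ)` and at
most `|M| = c(θ)` elements. Hence if `N = {θ^{k'}(a)_{j'} : a ∈ A}` is minimal, the column
`(k', j')` sends every `M ∈ 𝒳(θ)` onto `N`, i.e. `~θ^{k'}(M)_{j'} = N` for all `M`. After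
padding all `N ∈ 𝒳(θ)` to a common level `K`, this gives column number `1` and primitivity of
`~θ`. For the height, the fixed point `u` of `~θ` at `M₀` satisfies `u[l^K n + j] = M₀` for
every `n`, so any admissible `m` divides the difference `l^K` of two return times and, being
coprime to `l`, equals `1`.
-/

section SubstIter

variable {A : Type*} (θ : A → ℕ → A) {l : ℕ}

theorem substIter_add (k₁ k₂ : ℕ) (a : A) (m : ℕ) :
    substIter θ l (k₁ + k₂) a m =
      substIter θ l k₂ (substIter θ l k₁ a (m / l ^ k₂)) (m % l ^ k₂) := by
  induction k₂ generalizing m with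
  | zero => simp [substIter]
  | succ k ih =>
    rw [← add_assoc, substIter, substIter, ih, Nat.div_div_eq_div_mul, ← pow_succ',
      pow_succ', Nat.mod_mul_right_div_self,
      Nat.mod_mod_of_dvd m (dvd_mul_right l (l ^ k))]

theorem mul_add_lt_pow_add {k₁ k₂ j₁ j₂ : ℕ} (h₁ : j₁ < l ^ k₁) (h₂ : j₂ < l ^ k₂) :
    l ^ k₂ * j₁ + j₂ < l ^ (k₁ + k₂) :=
  calc l ^ k₂ * j₁ + j₂ < l ^ k₂ * (j₁ + 1) := by rw [Nat.mul_succ]; omega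
    _ ≤ l ^ k₂ * l ^ k₁ := Nat.mul_le_mul_left _ h₁
    _ = l ^ (k₁ + k₂) := by rw [← pow_add, add_comm]

theorem substIter_add_mul_add {k₁ k₂ j₂ : ℕ} (a : A) (j₁ : ℕ) (h₂ : j₂ < l ^ k₂) :
    substIter θ l (k₁ + k₂) a (l ^ k₂ * j₁ + j₂) =
      substIter θ l k₂ (substIter θ l k₁ a j₁) j₂ := by
  have hpos : 0 < l ^ k₂ := by omega
  rw [substIter_add, Nat.mul_add_div hpos, Nat.div_eq_of_lt h₂, add_zero, Nat.mul_add_mod,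
    Nat.mod_eq_of_lt h₂]

theorem image_column_image_column {k₁ k₂ j₂ : ℕ} (j₁ : ℕ) (h₂ : j₂ < l ^ k₂) (S : Set A) :
    (fun a => substIter θ l k₂ a j₂) '' ((fun a => substIter θ l k₁ a j₁) '' S) =
      (fun a => substIter θ l (k₁ + k₂) a (l ^ k₂ * j₁ + j₂)) '' S := by
  rw [Set.image_image]
  exact Set.image_congr' fun a => (substIter_add_mul_add θ a j₁ h₂).symm

theorem substIter_synchPart (k : ℕ) (M : Set A) (j : ℕ) :
    substIter (synchPart θ) l k M j = (fun a => substIter θ l k a j) '' M := by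
  induction k generalizing M j with
  | zero => simp [substIter]
  | succ k ih =>
    rw [substIter, ih, synchPart, Set.image_image]
    rfl

end SubstIter

section FixedPoint

variable {A : Type*} {θ : A → ℕ → A} {l : ℕ} {a₀ : A}

theorem substIter_succ_of_fixed (hfix : θ a₀ 0 = a₀) {k n : ℕ} (hn : n < l ^ k) :
    substIter θ l (k + 1) a₀ n = substIter θ l k a₀ n := by
  induction k generalizing n with
  | zero =>
    obtain rfl : n = 0 := by simpa using hn
    simp [substIter, hfix]
  | succ k ih =>
    have hdiv : n / l < l ^ k := Nat.div_lt_of_lt_mul (by rwa [← pow_succ'])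
    rw [substIter, ih hdiv, substIter]

theorem substIter_eq_of_le_of_fixed (hl : 0 < l) (hfix : θ a₀ 0 = a₀) {k k' n : ℕ}
    (hkk' : k ≤ k') (hn : n < l ^ k) : substIter θ l k' a₀ n = substIter θ l k a₀ n := by
  induction k', hkk' using Nat.le_induction with
  | base => rfl
  | succ k' hkk' ih =>
    have hn' : n < l ^ k' := hn.trans_le (Nat.pow_le_pow_right hl hkk')
    rw [substIter_succ_of_fixed hfix hn', ih]

theorem substFixedPoint_eq_substIter (hl : 1 < l) (hfix : θ a₀ 0 = a₀) {k n : ℕ}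
    (hn : n < l ^ k) : substFixedPoint θ l a₀ n = substIter θ l k a₀ n := by
  have hn₁ : n < l ^ (n + 1) := (Nat.lt_pow_self hl).trans (Nat.pow_lt_pow_succ hl)
  rw [substFixedPoint, ← substIter_eq_of_le_of_fixed (by omega) hfix (le_max_left k (n + 1)) hn,
    substIter_eq_of_le_of_fixed (by omega) hfix (le_max_right k (n + 1)) hn₁]

theorem substFixedPoint_zero (hfix : θ a₀ 0 = a₀) : substFixedPoint θ l a₀ 0 = a₀ := by
  simp [substFixedPoint, substIter, hfix]

theorem substFixedPoint_mul_add (hl : 1 < l) (hfix : θ a₀ 0 = a₀) {k j : ℕ} (n : ℕ)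
    (hj : j < l ^ k) :
    substFixedPoint θ l a₀ (l ^ k * n + j) = substIter θ l k (substFixedPoint θ l a₀ n) j := by
  have hn₁ : n < l ^ (n + 1) := (Nat.lt_pow_self hl).trans (Nat.pow_lt_pow_succ hl)
  rw [substFixedPoint_eq_substIter hl hfix (mul_add_lt_pow_add hn₁ hj),
    substIter_add_mul_add θ _ _ hj, substFixedPoint_eq_substIter hl hfix hn₁]

end FixedPoint

theorem substHeight_eq_one_of_returns {A : Type*} (θ : A → ℕ → A) (l : ℕ) (a₀ : A) {r k : ℕ}
    (hr : 1 ≤ r) (hu : substFixedPoint θ l a₀ r = substFixedPoint θ l a₀ 0)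
    (hu' : substFixedPoint θ l a₀ (r + l ^ k) = substFixedPoint θ l a₀ 0) :
    substHeight θ l a₀ = 1 := by
  have hset : { m : ℕ | 1 ≤ m ∧ Nat.Coprime m l ∧
      ∀ r : ℕ, 1 ≤ r → substFixedPoint θ l a₀ r = substFixedPoint θ l a₀ 0 → m ∣ r } = {1} := by
    ext m
    refine ⟨fun ⟨_, hcop, hdvd⟩ => ?_, ?_⟩
    · have hm : m ∣ l ^ k := (Nat.dvd_add_right (hdvd r hr hu)).mp (hdvd _ (by omega) hu')
      exact (Nat.Coprime.pow_right k hcop).eq_one_of_dvd hm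
    · rintro rfl
      exact ⟨le_rfl, Nat.coprime_one_left l, fun r _ _ => one_dvd r⟩
  rw [substHeight, hset, csSup_singleton]

theorem columnNumberOn_eq_one {A : Type*} [Finite A] (θ : A → ℕ → A) (l : ℕ) {S : Set A}
    (hS : S.Nonempty) {k j : ℕ} {b : A} (hk : 1 ≤ k) (hj : j < l ^ k)
    (hb : ∀ a ∈ S, substIter θ l k a j = b) : columnNumberOn θ l S = 1 := by
  have h₁ : ((fun a => substIter θ l k a j) '' S).ncard = 1 := by
    rw [Set.ncard_eq_one]
    exact ⟨b, Set.eq_singleton_iff_nonempty_unique_mem.mpr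
      ⟨hS.image _, by rintro _ ⟨a, ha, rfl⟩; exact hb a ha⟩⟩
  have hne : { n : ℕ | ∃ k, 1 ≤ k ∧ ∃ j, j < l ^ k ∧
      ((fun a => substIter θ l k a j) '' S).ncard = n }.Nonempty := ⟨1, k, hk, j, hj, h₁⟩
  obtain ⟨k', -, j', -, hmin⟩ := Nat.sInf_mem hne
  refine le_antisymm (Nat.sInf_le ⟨k, hk, j, hj, h₁⟩) ?_
  rw [columnNumberOn, ← hmin]
  exact (Set.ncard_pos (Set.toFinite _)).mpr (hS.image _)

section ColumnSets

variable {A : Type*} (θ : A → ℕ → A) {l : ℕ}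

theorem columnNumber_le_ncard {k j : ℕ} (hk : 1 ≤ k) (hj : j < l ^ k) :
    columnNumber θ l ≤ ((fun a => substIter θ l k a j) '' Set.univ).ncard :=
  Nat.sInf_le ⟨k, hk, j, hj, rfl⟩

theorem columnSets_nonempty (hl : 0 < l) : (columnSets θ l).Nonempty := by
  have hne : { n : ℕ | ∃ k, 1 ≤ k ∧ ∃ j, j < l ^ k ∧
      ((fun a => substIter θ l k a j) '' Set.univ).ncard = n }.Nonempty :=
    ⟨_, 1, le_rfl, 0, by rwa [pow_one], rfl⟩
  obtain ⟨k, hk, j, hj, hmin⟩ := Nat.sInf_mem hne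
  exact ⟨_, ⟨k, hk, j, hj, rfl⟩, hmin⟩

variable [Finite A]

theorem image_column_mem_columnSets {M : Set A} (hM : M ∈ columnSets θ l) {k j : ℕ}
    (hk : 1 ≤ k) (hj : j < l ^ k) :
    (fun a => substIter θ l k a j) '' M ∈ columnSets θ l := by
  obtain ⟨⟨k', -, j', hj', rfl⟩, hMc⟩ := hM
  rw [image_column_image_column θ j' hj]
  refine ⟨⟨k' + k, by omega, _, mul_add_lt_pow_add hj' hj, rfl⟩, le_antisymm ?_
    (columnNumber_le_ncard θ (by omega) (mul_add_lt_pow_add hj' hj))⟩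
  rw [← image_column_image_column θ j' hj, ← hMc]
  exact Set.ncard_image_le (Set.toFinite _)

theorem image_column_eq_of_mem_columnSets {N : Set A} (hN : N ∈ columnSets θ l) {k j : ℕ}
    (hk : 1 ≤ k) (hj : j < l ^ k) (hNkj : N = (fun a => substIter θ l k a j) '' Set.univ)
    {k' j' : ℕ} (hj' : j' < l ^ k') :
    (fun a => substIter θ l k a j) '' ((fun a => substIter θ l k' a j') '' Set.univ) = N := by
  have hsub : (fun a => substIter θ l k a j) '' ((fun a => substIter θ l k' a j') '' Set.univ)
      ⊆ N := hNkj ▸ Set.image_mono (Set.subset_univ _)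
  refine Set.eq_of_subset_of_ncard_le hsub ?_ (Set.toFinite _)
  rw [hN.2, image_column_image_column θ j' hj]
  exact columnNumber_le_ncard θ (by omega) (mul_add_lt_pow_add hj' hj)

theorem exists_level_columnSets (hl : 0 < l) : ∃ K, 1 ≤ K ∧ ∀ N ∈ columnSets θ l,
    ∃ j, j < l ^ K ∧ N = (fun a => substIter θ l K a j) '' Set.univ := by
  have hrep : ∀ N : columnSets θ l, ∃ k, 1 ≤ k ∧ ∃ j, j < l ^ k ∧
      (N : Set A) = (fun a => substIter θ l k a j) '' Set.univ := fun N => N.2.1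
  choose level hlevel j hj hNj using hrep
  obtain ⟨K, hK⟩ := (Set.finite_range level).bddAbove
  refine ⟨K + 1, by omega, fun N hN => ?_⟩
  have hle : level ⟨N, hN⟩ ≤ K := hK ⟨⟨N, hN⟩, rfl⟩
  obtain ⟨d, hd⟩ : ∃ d, K + 1 = d + level ⟨N, hN⟩ := ⟨K + 1 - level ⟨N, hN⟩, by omega⟩
  have hpad := image_column_eq_of_mem_columnSets θ hN (hlevel _) (hj _) (hNj ⟨N, hN⟩)
    (Nat.pow_pos hl : 0 < l ^ d)
  rw [image_column_image_column θ 0 (hj _), mul_zero, zero_add, ← hd] at hpad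
  exact ⟨j ⟨N, hN⟩, (hj _).trans_le (Nat.pow_le_pow_right hl (by omega)), hpad.symm⟩

theorem exists_synchPart_substIter_eq (hl : 0 < l) : ∃ K, 1 ≤ K ∧ ∀ N ∈ columnSets θ l,
    ∃ j, j < l ^ K ∧ ∀ M ∈ columnSets θ l, substIter (synchPart θ) l K M j = N := by
  obtain ⟨K, hK, hlevel⟩ := exists_level_columnSets θ hl
  refine ⟨K, hK, fun N hN => ?_⟩
  obtain ⟨j, hj, hNj⟩ := hlevel N hN
  refine ⟨j, hj, fun M hM => ?_⟩
  obtain ⟨⟨k', -, j', hj', rfl⟩, -⟩ := hM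
  rw [substIter_synchPart]
  exact image_column_eq_of_mem_columnSets θ hN hK hj hNj hj'

theorem synchPart_mem_columnSets {M : Set A} (hM : M ∈ columnSets θ l) {j : ℕ} (hj : j < l) :
    synchPart θ M j ∈ columnSets θ l := by
  have h₁ : synchPart θ M j = (fun a => substIter θ l 1 a j) '' M :=
    Set.image_congr' fun a => by simp [substIter, Nat.mod_eq_of_lt hj]
  exact h₁ ▸ image_column_mem_columnSets θ hM le_rfl (by rwa [pow_one])

theorem substFixedPoint_synchPart_mem_columnSets (hl : 1 < l) {M₀ : Set A}
    (hM₀ : M₀ ∈ columnSets θ l) (n : ℕ) :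
    substFixedPoint (synchPart θ) l M₀ n ∈ columnSets θ l := by
  rw [substFixedPoint, substIter_synchPart]
  exact image_column_mem_columnSets θ hM₀ (by omega)
    ((Nat.lt_pow_self hl).trans (Nat.pow_lt_pow_succ hl))

end ColumnSets

theorem synchronizing_part_properties_general
    {A : Type*} [Finite A] (l : ℕ) (hl : 2 ≤ l)
    (θ : A → ℕ → A) :
    (∀ M ∈ columnSets θ l, ∀ j, j < l → synchPart θ M j ∈ columnSets θ l) ∧
    columnNumberOn (synchPart θ) l (columnSets θ l) = 1 ∧
    SubstPrimitiveOn (synchPart θ) l (columnSets θ l) ∧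
    (∀ M₀ ∈ columnSets θ l, synchPart θ M₀ 0 = M₀ →
      substHeight (synchPart θ) l M₀ = 1) := by
  obtain ⟨K, hK, hsync⟩ := exists_synchPart_substIter_eq θ (by omega : 0 < l)
  refine ⟨fun M hM j hj => synchPart_mem_columnSets θ hM hj, ?_, ?_, ?_⟩
  · obtain ⟨C, hC⟩ := columnSets_nonempty θ (by omega : 0 < l)
    obtain ⟨j, hj, hjC⟩ := hsync C hC
    exact columnNumberOn_eq_one _ l ⟨C, hC⟩ hK hj hjC
  · refine ⟨K, hK, fun M hM N hN => ?_⟩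
    obtain ⟨j, hj, hjN⟩ := hsync N hN
    exact ⟨j, hj, hjN M hM⟩
  · intro M₀ hM₀ hfix
    obtain ⟨j, hj, hjM₀⟩ := hsync M₀ hM₀
    have hreturn : ∀ n, substFixedPoint (synchPart θ) l M₀ (l ^ K * n + j) =
        substFixedPoint (synchPart θ) l M₀ 0 := fun n => by
      rw [substFixedPoint_mul_add hl hfix n hj, substFixedPoint_zero hfix,
        hjM₀ _ (substFixedPoint_synchPart_mem_columnSets θ hl hM₀ n)]
    refine substHeight_eq_one_of_returns _ l M₀ (k := K) ?_ (hreturn 1) ?_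
    · have hpow := Nat.one_le_pow K l (by omega)
      omega
    · rw [← hreturn 2]
      congr 1
      ring

/-- The synchronizing part `~θ : 𝒳(θ) → 𝒳(θ)^λ` of a primitive
substitution `θ` is a well-defined substitution on `𝒳(θ)` which (i) has column number
`1`, (ii) is primitive, and (iii) has height `1` (for any `M₀ ∈ 𝒳(θ)` with
`~θ(M₀)_0 = M₀`). -/
theorem synchronizing_part_properties
    {A : Type*} [Finite A] (l : ℕ) (hl : 2 ≤ l)
    (θ : A → ℕ → A) (hθ : SubstPrimitive θ l) :
    (∀ M ∈ columnSets θ l, ∀ j, j < l → synchPart θ M j ∈ columnSets θ l) ∧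
    columnNumberOn (synchPart θ) l (columnSets θ l) = 1 ∧
    SubstPrimitiveOn (synchPart θ) l (columnSets θ l) ∧
    (∀ M₀ ∈ columnSets θ l, synchPart θ M₀ 0 = M₀ →
      substHeight (synchPart θ) l M₀ = 1) :=
  synchronizing_part_properties_general l hl θ
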